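/- arXiv:math/0511571 — 5 statements merged into one kernel-verified Lean document; each statement's English description precedes it below -/
import Mathlib

section
/- Define H_n^k = Σ_{j ≥ 0} M(n,j) · C(n-2j, k-j), where M(n,j) is the number of matchings of size j in the path graph on n vertices. Then H_n^k = H_n^{n-k} for all 0 ≤ k ≤ n, i.e., the sequence of coefficients is palindromic. -/
/-- The set of matchings of size `j` in the path graph on `n` vertices:
edges are indexed `0, …, n-2`, and a matching is a set of edge indices
pairwise differing by at least 2 (pairwise vertex-disjoint edges). -/
def pathMatchings (n j : ℕ) : Finset (Finset ℕ) :=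
  ((Finset.range (n - 1)).powersetCard j).filter
    (fun s => ∀ a ∈ s, ∀ b ∈ s, a ≠ b → a + 2 ≤ b ∨ b + 2 ≤ a)

/-- `M n j` = number of matchings of size `j` in the path graph `P_n`. -/
def M (n j : ℕ) : ℕ := (pathMatchings n j).card

/-- `H n k = Σ_{j ≥ 0} M(n,j) · C(n-2j, k-j)`.  Since `C(n-2j, k-j) = 0`
for `j > k`, the sum may be truncated at `j = k`. -/
def H (n k : ℕ) : ℕ := ∑ j ∈ Finset.range (k + 1), M n j * Nat.choose (n - 2 * j) (k - j)

lemma M_eq_zero {n j : ℕ} (h : n < 2 * j) : M n j = 0 := by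
  rw [M, Finset.card_eq_zero]
  by_contra hne
  obtain ⟨s, hs⟩ := Finset.nonempty_iff_ne_empty.mpr hne
  rw [pathMatchings, Finset.mem_filter, Finset.mem_powersetCard] at hs
  obtain ⟨⟨hsub, hcard⟩, hsep⟩ := hs
  have hdisj : Disjoint s (s.image (· + 1)) := by
    rw [Finset.disjoint_left]
    intro x hx hx'
    obtain ⟨y, hy, hxy⟩ := Finset.mem_image.mp hx'
    have := hsep y hy x hx (by omega)
    omega
  have hsubset : s ∪ s.image (· + 1) ⊆ Finset.range n := by
    intro x hx
    rcases Finset.mem_union.mp hx with hx | hx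
    · have := hsub hx
      simp only [Finset.mem_range] at *
      omega
    · obtain ⟨y, hy, rfl⟩ := Finset.mem_image.mp hx
      have := hsub hy
      simp only [Finset.mem_range] at *
      omega
  have hc := Finset.card_le_card hsubset
  rw [Finset.card_union_of_disjoint hdisj,
    Finset.card_image_of_injective _ (fun a b hab => by omega),
    Finset.card_range, hcard] at hc
  omega

theorem H_palindromic (n k : ℕ) (hk : k ≤ n) : H n k = H n (n - k) := by
  unfold H
  have trunc : ∀ a, a ≤ n →
      ∑ j ∈ Finset.range (a + 1), M n j * Nat.choose (n - 2 * j) (a - j)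
      = ∑ j ∈ Finset.range (min a (n - a) + 1), M n j * Nat.choose (n - 2 * j) (a - j) := by
    intro a ha
    refine (Finset.sum_subset ?_ ?_).symm
    · intro x hx
      simp only [Finset.mem_range] at *
      omega
    · intro x hx hnx
      simp only [Finset.mem_range] at hx hnx
      rcases le_or_gt (2 * x) n with h2 | h2
      · rw [Nat.choose_eq_zero_of_lt (by omega), Nat.mul_zero]
      · rw [M_eq_zero h2, Nat.zero_mul]
  rw [trunc k hk, trunc (n - k) (by omega)]
  have hmin : min (n - k) (n - (n - k)) = min k (n - k) := by omega
  rw [hmin]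
  apply Finset.sum_congr rfl
  intro j hj
  simp only [Finset.mem_range] at hj
  congr 1
  have h1 : j ≤ k := by omega
  have h2 : j ≤ n - k := by omega
  have heq : (n - k) - j = (n - 2 * j) - (k - j) := by omega
  rw [heq, Nat.choose_symm (show k - j ≤ n - 2 * j by omega)]
end

section
/- Define H_n^k = Σ_{j ≥ 0} M(n,j) · C(n-2j, k-j). Then for all n ≥ 2 and k ≥ 1, H_n^k = H_{n-1}^k + H_{n-1}^{k-1} + H_{n-2}^{k-1}. -/
lemma M_zero (n : ℕ) : M n 0 = 1 := by
  simp [M, pathMatchings, Finset.filter_singleton]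

lemma M_small (n j : ℕ) (h : n < 2) (hj : 1 ≤ j) : M n j = 0 := by
  have hpc : (Finset.range (n-1)).powersetCard j = ∅ := by
    rw [Finset.powersetCard_eq_empty]
    have : n - 1 = 0 := by omega
    simp [this]; omega
  simp [M, pathMatchings, hpc]

lemma M_rec (m j : ℕ) : M (m+2) (j+1) = M (m+1) (j+1) + M m j := by
  classical
  have hsplit := Finset.card_filter_add_card_filter_not
    (s := pathMatchings (m+2) (j+1)) (p := fun s => m ∈ s)
  rw [M, ← hsplit]
  have hA : (pathMatchings (m+2) (j+1)).filter (fun s => ¬ m ∈ s)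
      = pathMatchings (m+1) (j+1) := by
    ext s
    simp only [pathMatchings, Finset.mem_filter, Finset.mem_powersetCard,
      Finset.subset_iff, Finset.mem_range]
    constructor
    · rintro ⟨⟨⟨hsub, hcard⟩, hcond⟩, hm⟩
      refine ⟨⟨fun a ha => ?_, hcard⟩, hcond⟩
      have h1 := hsub ha
      have h2 : a ≠ m := fun h => hm (h ▸ ha)
      omega
    · rintro ⟨⟨hsub, hcard⟩, hcond⟩
      refine ⟨⟨⟨fun a ha => by have := hsub ha; omega, hcard⟩, hcond⟩, fun hm => ?_⟩
      have := hsub hm; omega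
  have hB : ((pathMatchings (m+2) (j+1)).filter (fun s => m ∈ s)).card
      = (pathMatchings m j).card := by
    refine Finset.card_bij' (fun s _ => s.erase m) (fun t _ => insert m t)
      ?hi ?hj ?li ?ri
    case hi =>
      intro s hs
      simp only [pathMatchings, Finset.mem_filter, Finset.mem_powersetCard,
        Finset.subset_iff, Finset.mem_range] at hs ⊢
      obtain ⟨⟨⟨hsub, hcard⟩, hcond⟩, hm⟩ := hs
      refine ⟨⟨fun a ha => ?_, ?_⟩, ?_⟩
      · rw [Finset.mem_erase] at ha
        obtain ⟨hne, ha⟩ := ha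
        have h1 := hsub ha
        have h2 := hcond a ha m hm hne
        omega
      · rw [Finset.card_erase_of_mem hm, hcard]; omega
      · intro a ha b hb hab
        exact hcond a (Finset.mem_of_mem_erase ha) b (Finset.mem_of_mem_erase hb) hab
    case hj =>
      intro t ht
      simp only [pathMatchings, Finset.mem_filter, Finset.mem_powersetCard,
        Finset.subset_iff, Finset.mem_range] at ht ⊢
      obtain ⟨⟨hsub, hcard⟩, hcond⟩ := ht
      have hmt : m ∉ t := fun hm => by have := hsub hm; omega
      refine ⟨⟨⟨fun a ha => ?_, ?_⟩, ?_⟩, Finset.mem_insert_self m t⟩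
      · rw [Finset.mem_insert] at ha
        rcases ha with rfl | ha
        · omega
        · have := hsub ha; omega
      · rw [Finset.card_insert_of_notMem hmt, hcard]
      · intro a ha b hb hab
        rw [Finset.mem_insert] at ha hb
        rcases ha with rfl | ha
        · rcases hb with rfl | hb
          · exact absurd rfl hab
          · have := hsub hb; right; omega
        · rcases hb with rfl | hb
          · have := hsub ha; left; omega
          · exact hcond a ha b hb hab
    case li =>
      intro s hs
      simp only [Finset.mem_filter] at hs
      exact Finset.insert_erase hs.2
    case ri =>
      intro t ht
      simp only [pathMatchings, Finset.mem_filter, Finset.mem_powersetCard,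
        Finset.subset_iff, Finset.mem_range] at ht
      have hmt : m ∉ t := fun hm => by have := ht.1.1 hm; omega
      exact Finset.erase_insert hmt
  rw [hA, hB, M, M, Nat.add_comm]

lemma M_vanish (n j : ℕ) (h : n < 2 * j) : M n j = 0 := by
  induction n using Nat.strong_induction_on generalizing j with
  | _ n ih =>
    match n, j with
    | 0, j => exact M_small 0 j (by omega) (by omega)
    | 1, j => exact M_small 1 j (by omega) (by omega)
    | (m+2), 0 => omega
    | (m+2), (j+1) =>
      rw [M_rec, ih (m+1) (by omega) (j+1) (by omega), ih m (by omega) j (by omega)]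

theorem H_recurrence (n k : ℕ) (hn : 2 ≤ n) (hk : 1 ≤ k) :
    H n k = H (n - 1) k + H (n - 1) (k - 1) + H (n - 2) (k - 1) := by
  obtain ⟨m, rfl⟩ : ∃ m, n = m + 2 := ⟨n - 2, by omega⟩
  obtain ⟨l, rfl⟩ : ∃ l, k = l + 1 := ⟨k - 1, by omega⟩
  show H (m+2) (l+1) = H (m+1) (l+1) + H (m+1) l + H m l
  have pascal : ∀ j, j < l → M (m+1) (j+1) * Nat.choose (m - 2*j) (l - j)
      = M (m+1) (j+1) * Nat.choose (m - 1 - 2*j) (l - j)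
        + M (m+1) (j+1) * Nat.choose (m - 1 - 2*j) (l - 1 - j) := by
    intro j hj
    by_cases hm : m + 1 < 2 * (j + 1)
    · rw [M_vanish _ _ hm]; ring
    · have h1 : m - 2*j = (m - 1 - 2*j) + 1 := by omega
      have h2 : l - j = (l - 1 - j) + 1 := by omega
      rw [h1, h2, Nat.choose_succ_succ, Nat.mul_add]
      ring
  have L : H (m+2) (l+1)
      = ((∑ j ∈ Finset.range (l+1), M (m+1) (j+1) * Nat.choose (m - 2*j) (l - j))
        + (∑ j ∈ Finset.range (l+1), M m j * Nat.choose (m - 2*j) (l - j)))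
        + Nat.choose (m+2) (l+1) := by
    rw [H, Finset.sum_range_succ']
    rw [← Finset.sum_add_distrib]
    congr 1
    · apply Finset.sum_congr rfl
      intro j _
      have e1 : m + 2 - 2*(j+1) = m - 2*j := by omega
      have e2 : l + 1 - (j+1) = l - j := by omega
      rw [M_rec, Nat.add_mul, e1, e2]
    · simp [M_zero]
  have R1 : H (m+1) (l+1)
      = (∑ j ∈ Finset.range (l+1), M (m+1) (j+1) * Nat.choose (m - 1 - 2*j) (l - j))
        + Nat.choose (m+1) (l+1) := by
    rw [H, Finset.sum_range_succ']
    congr 1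
    · apply Finset.sum_congr rfl
      intro j _
      have e1 : m + 1 - 2*(j+1) = m - 1 - 2*j := by omega
      have e2 : l + 1 - (j+1) = l - j := by omega
      rw [e1, e2]
    · simp [M_zero]
  have R2 : H (m+1) l
      = (∑ j ∈ Finset.range l, M (m+1) (j+1) * Nat.choose (m - 1 - 2*j) (l - 1 - j))
        + Nat.choose (m+1) l := by
    rw [H, Finset.sum_range_succ']
    congr 1
    · apply Finset.sum_congr rfl
      intro j _
      have e1 : m + 1 - 2*(j+1) = m - 1 - 2*j := by omega
      have e2 : l - (j+1) = l - 1 - j := by omega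
      rw [e1, e2]
    · simp [M_zero]
  have key : (∑ j ∈ Finset.range (l+1), M (m+1) (j+1) * Nat.choose (m - 2*j) (l - j))
      = (∑ j ∈ Finset.range (l+1), M (m+1) (j+1) * Nat.choose (m - 1 - 2*j) (l - j))
        + (∑ j ∈ Finset.range l, M (m+1) (j+1) * Nat.choose (m - 1 - 2*j) (l - 1 - j)) := by
    rw [Finset.sum_range_succ, Finset.sum_range_succ
      (f := fun j => M (m+1) (j+1) * Nat.choose (m - 1 - 2*j) (l - j))]
    have e1 : l - l = 0 := by omega
    rw [e1, Nat.choose_zero_right, Nat.choose_zero_right]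
    have e2 : ∑ j ∈ Finset.range l, M (m+1) (j+1) * Nat.choose (m - 2*j) (l - j)
        = ∑ j ∈ Finset.range l, (M (m+1) (j+1) * Nat.choose (m - 1 - 2*j) (l - j)
          + M (m+1) (j+1) * Nat.choose (m - 1 - 2*j) (l - 1 - j)) := by
      apply Finset.sum_congr rfl
      intro j hj
      exact pascal j (Finset.mem_range.mp hj)
    rw [e2, Finset.sum_add_distrib]
    ring
  have pas2 : Nat.choose (m+2) (l+1) = Nat.choose (m+1) l + Nat.choose (m+1) (l+1) :=
    Nat.choose_succ_succ (m+1) l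
  rw [L, R1, R2, key, pas2, H]
  ring
end

section
/- Let A be an algebra presented by generators a_1,...,a_n with relations all of the form [a_i, a_j] = 0 (a PGC-algebra), and let G be its non-commuting graph (vertices are generators, edge between a_i and a_j iff [a_i,a_j]=0 is NOT a relation). Suppose there is a bijective labeling ℓ of the vertices by {1,...,n} such that for any three vertices a, b, c with {a,c} an edge and {a,b}, {b,c} non-edges, neither ℓ(a) < ℓ(b) < ℓ(c) nor ℓ(c) < ℓ(b) < ℓ(a) holds. Then, ordering monomials by length and then lexicographically by ℓ, every degree-three overlap ambiguity of the reduction system given by the commutation relations resolves. -/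
/-- One reduction step of the PGC rewriting system: replace an adjacent pair
`a b` with `b a` whenever `[a,b] = 0` is a relation (`comm a b`) and `a` is
larger than `b` in the labeling `ℓ` (so monomials decrease lexicographically,
after ordering first by length). -/
def PGCStep (n : ℕ) (comm : Fin n → Fin n → Prop) (ℓ : Fin n ≃ Fin n)
    (w w' : List (Fin n)) : Prop :=
  ∃ (p s : List (Fin n)) (a b : Fin n),
    comm a b ∧ ℓ b < ℓ a ∧ w = p ++ a :: b :: s ∧ w' = p ++ b :: a :: s

namespace PGCaux

variable {n : ℕ} {comm : Fin n → Fin n → Prop} {ℓ : Fin n ≃ Fin n}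

def invm (ℓ : Fin n ≃ Fin n) : List (Fin n) → ℕ
  | [x, y, z] =>
      (if ℓ y < ℓ x then 1 else 0) + (if ℓ z < ℓ x then 1 else 0) +
        (if ℓ z < ℓ y then 1 else 0)
  | _ => 0

lemma len3 {w : List (Fin n)} (h : w.length = 3) : ∃ x y z, w = [x, y, z] := by
  rcases w with _ | ⟨x, _ | ⟨y, _ | ⟨z, _ | ⟨t, r⟩⟩⟩⟩ <;> simp at h
  exact ⟨x, y, z, rfl⟩

lemma step_length {w w' : List (Fin n)} (h : PGCStep n comm ℓ w w') :
    w'.length = w.length := by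
  obtain ⟨p, s, a, b, _, _, rfl, rfl⟩ := h
  simp

lemma rtg_length {w w' : List (Fin n)}
    (h : Relation.ReflTransGen (PGCStep n comm ℓ) w w') :
    w'.length = w.length := by
  induction h with
  | refl => rfl
  | tail _ hs ih => rw [step_length hs, ih]

lemma mk1 {x y z : Fin n} (hc : comm x y) (hl : ℓ y < ℓ x) :
    PGCStep n comm ℓ [x, y, z] [y, x, z] :=
  ⟨[], [z], x, y, hc, hl, rfl, rfl⟩

lemma mk2 {x y z : Fin n} (hc : comm y z) (hl : ℓ z < ℓ y) :
    PGCStep n comm ℓ [x, y, z] [x, z, y] :=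
  ⟨[x], [], y, z, hc, hl, rfl, rfl⟩

lemma step_cases {x y z : Fin n} {w' : List (Fin n)}
    (h : PGCStep n comm ℓ [x, y, z] w') :
    (comm x y ∧ ℓ y < ℓ x ∧ w' = [y, x, z]) ∨
    (comm y z ∧ ℓ z < ℓ y ∧ w' = [x, z, y]) := by
  obtain ⟨p, s, a, b, hc, hl, hw, rfl⟩ := h
  rcases p with _ | ⟨q, _ | ⟨q', p⟩⟩
  · simp at hw
    obtain ⟨rfl, rfl, rfl⟩ := hw
    exact Or.inl ⟨hc, hl, rfl⟩
  · simp at hw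
    obtain ⟨rfl, rfl, rfl, rfl⟩ := hw
    exact Or.inr ⟨hc, hl, rfl⟩
  · exfalso
    have := congrArg List.length hw
    simp at this
    omega

lemma inv_lt {x y z : Fin n} {w' : List (Fin n)}
    (h : PGCStep n comm ℓ [x, y, z] w') :
    invm ℓ w' < invm ℓ [x, y, z] := by
  rcases step_cases h with ⟨_, hl, rfl⟩ | ⟨_, hl, rfl⟩ <;>
    · simp only [invm, Fin.lt_def] at *
      split_ifs <;> omega

/-- Local confluence for 3-letter words. -/
lemma confl
    (hord : ∀ a b c : Fin n, a ≠ b → b ≠ c → a ≠ c →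
      ¬ comm a c → comm a b → comm b c →
      ¬(ℓ a < ℓ b ∧ ℓ b < ℓ c) ∧ ¬(ℓ c < ℓ b ∧ ℓ b < ℓ a))
    {x y z : Fin n} {u₁ u₂ : List (Fin n)}
    (h₁ : PGCStep n comm ℓ [x, y, z] u₁) (h₂ : PGCStep n comm ℓ [x, y, z] u₂) :
    ∃ d, Relation.ReflTransGen (PGCStep n comm ℓ) u₁ d ∧
      Relation.ReflTransGen (PGCStep n comm ℓ) u₂ d := by
  have key : ∀ (hcxy : comm x y) (hlyx : ℓ y < ℓ x) (hcyz : comm y z)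
      (hlzy : ℓ z < ℓ y),
      ∃ d, Relation.ReflTransGen (PGCStep n comm ℓ) [y, x, z] d ∧
        Relation.ReflTransGen (PGCStep n comm ℓ) [x, z, y] d := by
    intro hcxy hlyx hcyz hlzy
    have hlzx : ℓ z < ℓ x := hlzy.trans hlyx
    have hxy : x ≠ y := fun h => absurd hlyx (by rw [h]; exact lt_irrefl _)
    have hyz : y ≠ z := fun h => absurd hlzy (by rw [h]; exact lt_irrefl _)
    have hxz : x ≠ z := fun h => absurd hlzx (by rw [h]; exact lt_irrefl _)
    have hcxz : comm x z := by
      by_contra hn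
      exact (hord x y z hxy hyz hxz hn hcxy hcyz).2 ⟨hlzy, hlyx⟩
    refine ⟨[z, y, x], ?_, ?_⟩
    · exact (Relation.ReflTransGen.head (mk2 hcxz hlzx)
        (Relation.ReflTransGen.head (mk1 hcyz hlzy) .refl))
    · exact (Relation.ReflTransGen.head (mk1 hcxz hlzx)
        (Relation.ReflTransGen.head (mk2 hcxy hlyx) .refl))
  rcases step_cases h₁ with ⟨hc₁, hl₁, rfl⟩ | ⟨hc₁, hl₁, rfl⟩ <;>
    rcases step_cases h₂ with ⟨hc₂, hl₂, rfl⟩ | ⟨hc₂, hl₂, rfl⟩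
  · exact ⟨_, .refl, .refl⟩
  · exact key hc₁ hl₁ hc₂ hl₂
  · obtain ⟨d, hd₁, hd₂⟩ := key hc₂ hl₂ hc₁ hl₁
    exact ⟨d, hd₂, hd₁⟩
  · exact ⟨_, .refl, .refl⟩

/-- Existence of normal forms. -/
lemma exists_nf : ∀ (k : ℕ) (w : List (Fin n)), invm ℓ w ≤ k → w.length = 3 →
    ∃ u, Relation.ReflTransGen (PGCStep n comm ℓ) w u ∧
      ∀ u', ¬ PGCStep n comm ℓ u u' := by
  intro k
  induction k with
  | zero =>
    intro w hk hw
    refine ⟨w, .refl, fun u' hu' => ?_⟩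
    obtain ⟨x, y, z, rfl⟩ := len3 hw
    have := inv_lt hu'
    omega
  | succ k ih =>
    intro w hk hw
    by_cases h : ∃ w', PGCStep n comm ℓ w w'
    · obtain ⟨w', hs⟩ := h
      obtain ⟨x, y, z, rfl⟩ := len3 hw
      have hlt := inv_lt hs
      obtain ⟨u, hru, hnu⟩ := ih w' (by omega) (by rw [step_length hs]; exact hw)
      exact ⟨u, .head hs hru, hnu⟩
    · exact ⟨w, .refl, fun u' hu' => h ⟨u', hu'⟩⟩

lemma uniq
    (hord : ∀ a b c : Fin n, a ≠ b → b ≠ c → a ≠ c →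
      ¬ comm a c → comm a b → comm b c →
      ¬(ℓ a < ℓ b ∧ ℓ b < ℓ c) ∧ ¬(ℓ c < ℓ b ∧ ℓ b < ℓ a)) :
    ∀ (k : ℕ) (w u v : List (Fin n)), invm ℓ w ≤ k → w.length = 3 →
      Relation.ReflTransGen (PGCStep n comm ℓ) w u →
      Relation.ReflTransGen (PGCStep n comm ℓ) w v →
      (∀ u', ¬ PGCStep n comm ℓ u u') →
      (∀ v', ¬ PGCStep n comm ℓ v v') → u = v := by
  intro k
  induction k with
  | zero =>
    intro w u v hk hw hu hv _ _
    obtain ⟨x, y, z, rfl⟩ := len3 hw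
    rcases hu.cases_head with rfl | ⟨u₁, hsu, _⟩
    · rcases hv.cases_head with rfl | ⟨v₁, hsv, _⟩
      · rfl
      · have := inv_lt hsv; omega
    · have := inv_lt hsu; omega
  | succ k ih =>
    intro w u v hk hw hu hv hnu hnv
    obtain ⟨x, y, z, rfl⟩ := len3 hw
    rcases hu.cases_head with rfl | ⟨u₁, hsu, hru⟩
    · rcases hv.cases_head with rfl | ⟨v₁, hsv, _⟩
      · rfl
      · exact absurd hsv (hnu v₁)
    · rcases hv.cases_head with rfl | ⟨v₁, hsv, hrv⟩
      · exact absurd hsu (hnv u₁)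
      · obtain ⟨d, hd₁, hd₂⟩ := confl hord hsu hsv
        have hlu₁ : u₁.length = 3 := by rw [step_length hsu]; exact hw
        have hlv₁ : v₁.length = 3 := by rw [step_length hsv]; exact hw
        have hld : d.length = 3 := by rw [rtg_length hd₁]; exact hlu₁
        obtain ⟨e, hde, hne⟩ := exists_nf (invm ℓ d) d le_rfl hld
        have hiu := inv_lt hsu
        have hiv := inv_lt hsv
        have h1 : u = e :=
          ih u₁ u e (by omega) hlu₁ hru (hd₁.trans hde) hnu hne
        have h2 : v = e :=
          ih v₁ v e (by omega) hlv₁ hrv (hd₂.trans hde) hnv hne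
        exact h1.trans h2.symm

end PGCaux

/-- If a PGC-algebra admits a bijective labeling of its generators such that
for any three distinct vertices `a, b, c` with `{a,c}` an edge of the
non-commuting graph (`¬ comm a c`) and `{a,b}`, `{b,c}` non-edges
(`comm a b`, `comm b c`), `b` never lies strictly between `a` and `c` in the
labeling, then every degree-three overlap ambiguity resolves: any two normal
forms of a word of length three coincide. -/
theorem pgc_degree_three_ambiguities_resolve
    (n : ℕ) (comm : Fin n → Fin n → Prop)
    (hsymm : ∀ a b : Fin n, comm a b → comm b a)
    (ℓ : Fin n ≃ Fin n)
    (hord : ∀ a b c : Fin n, a ≠ b → b ≠ c → a ≠ c →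
      ¬ comm a c → comm a b → comm b c →
      ¬(ℓ a < ℓ b ∧ ℓ b < ℓ c) ∧ ¬(ℓ c < ℓ b ∧ ℓ b < ℓ a)) :
    ∀ w u v : List (Fin n), w.length = 3 →
      Relation.ReflTransGen (PGCStep n comm ℓ) w u →
      Relation.ReflTransGen (PGCStep n comm ℓ) w v →
      (∀ u', ¬ PGCStep n comm ℓ u u') →
      (∀ v', ¬ PGCStep n comm ℓ v v') →
      u = v := by
  intro w u v hw hu hv hnu hnv
  exact PGCaux.uniq hord (PGCaux.invm ℓ w) w u v le_rfl hw hu hv hnu hnv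
end

section
/- For three distinct indices i, j, k, let V be the 6-dimensional vector space spanned by symbols u(i), u(j), u(k), u(i,j), u(j,k), u(i,k) (where u(a,b) = u(b,a)), and consider the natural S_3-action on the degree-2 part of the tensor algebra T(V) induced by permuting indices. Let v_{i,j,k} = [u(i,k),u(j,k)] + [u(i,k),u(j)] + [u(i),u(j,k)] − u(i,j)(u(i,k) − u(j,k)). Then the linear span of the S_3-orbit of v_{i,j,k} has dimension exactly 2, and is spanned by v_{i,j,k} and v_{k,j,i}. -/
noncomputable section

/-- Basis indices for the 6-dimensional space: `Sum.inl a` is the node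
symbol `u(a)`, and `Sum.inr c` is the edge symbol `u(a,b)` where `{a,b}` is
the complement of `{c}` in `{0,1,2}` (an unordered pair of distinct elements
of a 3-element set is determined by its complementary element). -/
abbrev PentIdx := Fin 3 ⊕ Fin 3

/-- `u(a)`, the node generator. -/
def nodeGen (a : Fin 3) : FreeAlgebra ℚ PentIdx := FreeAlgebra.ι ℚ (Sum.inl a)

/-- `edgeGen c = u(a,b)` where `{a,b,c} = {0,1,2}`. -/
def edgeGen (c : Fin 3) : FreeAlgebra ℚ PentIdx := FreeAlgebra.ι ℚ (Sum.inr c)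

/-- The natural `S_3`-action on the tensor algebra, permuting indices of both
nodes and edges (the complementary index of an edge transforms by `σ`). -/
def permAct (σ : Equiv.Perm (Fin 3)) :
    FreeAlgebra ℚ PentIdx →ₐ[ℚ] FreeAlgebra ℚ PentIdx :=
  FreeAlgebra.lift ℚ (fun b => FreeAlgebra.ι ℚ (Sum.map σ σ b))

/-- The commutator `[x,y] = xy - yx`. -/
def brk (x y : FreeAlgebra ℚ PentIdx) : FreeAlgebra ℚ PentIdx := x * y - y * x

/-- `v_{i,j,k} = [u(i,k),u(j,k)] + [u(i,k),u(j)] + [u(i),u(j,k)]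
      - u(i,j)(u(i,k) - u(j,k))`, where for distinct `i,j,k`,
`u(i,k) = edgeGen j`, `u(j,k) = edgeGen i`, `u(i,j) = edgeGen k`. -/
def vElt (i j k : Fin 3) : FreeAlgebra ℚ PentIdx :=
  brk (edgeGen j) (edgeGen i) + brk (edgeGen j) (nodeGen j)
    + brk (nodeGen i) (edgeGen i) - edgeGen k * (edgeGen j - edgeGen i)

lemma permAct_vElt (σ : Equiv.Perm (Fin 3)) (i j k : Fin 3) :
    permAct σ (vElt i j k) = vElt (σ i) (σ j) (σ k) := by
  simp only [vElt, brk, map_sub, map_add, map_mul, permAct, edgeGen, nodeGen,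
    FreeAlgebra.lift_ι_apply, Sum.map_inl, Sum.map_inr]

lemma mem1 (i j k : Fin 3) :
    vElt i j k ∈ Submodule.span ℚ {vElt i j k, vElt k j i} :=
  Submodule.subset_span (Set.mem_insert _ _)

lemma mem2 (i j k : Fin 3) :
    vElt j i k ∈ Submodule.span ℚ {vElt i j k, vElt k j i} :=
  Submodule.mem_span_pair.2 ⟨-1, 0, by
    simp only [neg_smul, one_smul, zero_smul, add_zero]
    unfold vElt brk; noncomm_ring⟩

lemma mem3 (i j k : Fin 3) :
    vElt k j i ∈ Submodule.span ℚ {vElt i j k, vElt k j i} :=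
  Submodule.subset_span (Set.mem_insert_of_mem _ rfl)

lemma mem4 (i j k : Fin 3) :
    vElt j k i ∈ Submodule.span ℚ {vElt i j k, vElt k j i} :=
  Submodule.mem_span_pair.2 ⟨0, -1, by
    simp only [neg_smul, one_smul, zero_smul, zero_add]
    unfold vElt brk; noncomm_ring⟩

lemma mem5 (i j k : Fin 3) :
    vElt k i j ∈ Submodule.span ℚ {vElt i j k, vElt k j i} :=
  Submodule.mem_span_pair.2 ⟨-1, 1, by
    simp only [neg_smul, one_smul, zero_smul]
    unfold vElt brk; noncomm_ring⟩

lemma mem6 (i j k : Fin 3) :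
    vElt i k j ∈ Submodule.span ℚ {vElt i j k, vElt k j i} :=
  Submodule.mem_span_pair.2 ⟨1, -1, by
    simp only [neg_smul, one_smul, zero_smul]
    unfold vElt brk; noncomm_ring⟩

lemma cover (x a b c : Fin 3) (h1 : a ≠ b) (h2 : b ≠ c) (h3 : a ≠ c) :
    x = a ∨ x = b ∨ x = c := by revert x a b c; decide

/-- Evaluation into 2×2 matrices used to detect linear independence. -/
def evalM (i j : Fin 3) : FreeAlgebra ℚ PentIdx →ₐ[ℚ] Matrix (Fin 2) (Fin 2) ℚ :=
  FreeAlgebra.lift ℚ (fun b => match b with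
    | Sum.inl _ => 0
    | Sum.inr c => if c = j then !![0,1;0,0] else if c = i then !![0,0;1,0] else 0)

lemma evalM_v1 (i j k : Fin 3) (hij : i ≠ j) (hjk : j ≠ k) (hik : i ≠ k) :
    evalM i j (vElt i j k) = !![1,0;0,-1] := by
  simp only [vElt, brk, map_sub, map_add, map_mul, evalM, edgeGen, nodeGen,
    FreeAlgebra.lift_ι_apply, if_pos rfl, if_neg hij, if_neg (Ne.symm hjk),
    if_neg (Ne.symm hik)]
  ext a b
  fin_cases a <;> fin_cases b <;> simp [Matrix.mul_apply, Fin.sum_univ_two]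

lemma evalM_v2 (i j k : Fin 3) (hij : i ≠ j) (hjk : j ≠ k) (hik : i ≠ k) :
    evalM i j (vElt k j i) = !![0,0;0,-1] := by
  simp only [vElt, brk, map_sub, map_add, map_mul, evalM, edgeGen, nodeGen,
    FreeAlgebra.lift_ι_apply, if_pos rfl, if_neg hij, if_neg (Ne.symm hjk),
    if_neg (Ne.symm hik)]
  ext a b
  fin_cases a <;> fin_cases b <;> simp [Matrix.mul_apply, Fin.sum_univ_two]

lemma indep (i j k : Fin 3) (hij : i ≠ j) (hjk : j ≠ k) (hik : i ≠ k) :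
    LinearIndependent ℚ ![vElt i j k, vElt k j i] := by
  rw [LinearIndependent.pair_iff]
  intro s t hst
  have h : s • (!![1,0;0,-1] : Matrix (Fin 2) (Fin 2) ℚ) + t • !![0,0;0,-1] = 0 := by
    rw [← evalM_v1 i j k hij hjk hik, ← evalM_v2 i j k hij hjk hik,
      ← map_smul, ← map_smul, ← map_add, hst, map_zero]
  have h00 := congrFun (congrFun h 0) 0
  have h11 := congrFun (congrFun h 1) 1
  simp [Matrix.add_apply, Matrix.smul_apply] at h00 h11
  constructor
  · exact h00
  · rw [h00] at h11; linarith

/-- The span of the `S_3`-orbit of `v_{i,j,k}` is two-dimensional, spanned by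
`v_{i,j,k}` and `v_{k,j,i}`. -/
theorem orbit_span_dim_two (i j k : Fin 3)
    (hij : i ≠ j) (hjk : j ≠ k) (hik : i ≠ k) :
    Submodule.span ℚ
        (Set.range fun σ : Equiv.Perm (Fin 3) => permAct σ (vElt i j k))
      = Submodule.span ℚ {vElt i j k, vElt k j i} ∧
    Module.finrank ℚ
        (Submodule.span ℚ
          (Set.range fun σ : Equiv.Perm (Fin 3) => permAct σ (vElt i j k)))
      = 2 := by
  have hspan : Submodule.span ℚ
      (Set.range fun σ : Equiv.Perm (Fin 3) => permAct σ (vElt i j k))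
      = Submodule.span ℚ {vElt i j k, vElt k j i} := by
    apply le_antisymm
    · rw [Submodule.span_le]
      rintro _ ⟨σ, rfl⟩
      rcases cover (σ i) i j k hij hjk hik with ha | ha | ha <;>
        rcases cover (σ j) i j k hij hjk hik with hb | hb | hb <;>
        rcases cover (σ k) i j k hij hjk hik with hc | hc | hc <;>
        first
          | exact absurd (σ.injective (ha.trans hb.symm)) hij
          | exact absurd (σ.injective (ha.trans hc.symm)) hik
          | exact absurd (σ.injective (hb.trans hc.symm)) hjk
          | (simp only [SetLike.mem_coe, permAct_vElt, ha, hb, hc]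
             first
               | exact mem1 i j k
               | exact mem2 i j k
               | exact mem3 i j k
               | exact mem4 i j k
               | exact mem5 i j k
               | exact mem6 i j k)
    · rw [Submodule.span_le]
      rintro x hx
      rcases hx with rfl | rfl
      · exact Submodule.subset_span
          ⟨1, by simp only [permAct_vElt, Equiv.Perm.coe_one, id_eq]⟩
      · refine Submodule.subset_span ⟨Equiv.swap i k, ?_⟩
        simp only [permAct_vElt, Equiv.swap_apply_left, Equiv.swap_apply_right,
          Equiv.swap_apply_of_ne_of_ne (Ne.symm hij) hjk]
  refine ⟨hspan, ?_⟩
  rw [hspan]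
  have hr : Set.range ![vElt i j k, vElt k j i] = {vElt i j k, vElt k j i} := by
    ext z; simp [Fin.exists_fin_two, or_comm, eq_comm]
  have := finrank_span_eq_card (indep i j k hij hjk hik)
  rw [hr] at this
  simpa using this

end
end

section
/- For n ≥ 1 and 0 ≤ k ≤ n, the number of independent sets of size k in the graph G_n on 2n−1 vertices formed by the vertices and edges of the path P_n (with an edge of G_n between two elements iff they are 'adjacent': consecutive path-edges, or a path-edge and one of its two endpoints — but NOT between two path-vertices and NOT between a path-edge and a non-incident vertex) equals Σ_j M(n,j) C(n-2j, k-j). -/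
/-- One-directional adjacency generating the graph `G_n` on the vertices and
edges of the path `P_n`: consecutive path-edges are related, and a path-edge
is related to each of its two endpoints. -/
def pathRel (n : ℕ) : (Fin n ⊕ Fin (n - 1)) → (Fin n ⊕ Fin (n - 1)) → Prop
  | Sum.inr i, Sum.inr j => i.val + 1 = j.val
  | Sum.inr i, Sum.inl v => v.val = i.val ∨ v.val = i.val + 1
  | _, _ => False

/-- The graph `G_n` on `{v_1,…,v_n} ∪ {e_1,…,e_{n-1}}` with edges
`{e_i, e_{i+1}}`, `{e_i, v_i}`, `{e_i, v_{i+1}}` only. -/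
def pathGraph (n : ℕ) : SimpleGraph (Fin n ⊕ Fin (n - 1)) where
  Adj a b := pathRel n a b ∨ pathRel n b a
  symm := ⟨by intro a b h; tauto⟩
  loopless :=
    ⟨by rintro (v | e) h <;> rcases h with h | h <;> simp [pathRel] at h⟩

/-!
An independent set `S` of `G_n` splits into a set `E` of path edges and a set `V` of path
vertices. Independence says exactly that no two edges of `E` are consecutive, i.e. `E` is a
matching of `P_n`, and that `V` avoids the `2 * #E` endpoints of `E`. Hence each matching of size
`j` extends in `C(n - 2j, k - j)` ways to an independent set of size `k`.
-/
open Finset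

lemma card_filter_toLeft_toRight {α β : Type*} [Fintype α] [Fintype β]
    (q : Finset α → Finset β → Prop) [∀ V E, Decidable (q V E)] :
    #{S : Finset (α ⊕ β) | q S.toLeft S.toRight} = ∑ E : Finset β, #{V : Finset α | q V E} := by
  classical
  rw [card_eq_sum_card_fiberwise (f := toRight) (t := univ) (by simp)]
  refine sum_congr rfl fun E _ => ?_
  refine card_bij' (fun S _ => S.toLeft) (fun V _ => V.disjSum E) ?_ ?_ ?_ ?_
  · intro S hS
    simp only [mem_filter, mem_univ, true_and] at hS ⊢
    exact hS.2 ▸ hS.1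
  · intro V hV
    simpa using hV
  · intro S hS
    simp only [mem_filter, mem_univ, true_and] at hS
    rw [← hS.2, toLeft_disjSum_toRight]
  · intro V _
    exact toLeft_disjSum

def IsPathMatching {m : ℕ} (E : Finset (Fin m)) : Prop := ∀ i ∈ E, ∀ j ∈ E, i.val + 1 ≠ j.val

instance {m : ℕ} : DecidablePred (IsPathMatching (m := m)) := fun E => by
  unfold IsPathMatching; infer_instance

lemma card_isPathMatching (n j : ℕ) :
    #{E : Finset (Fin (n - 1)) | IsPathMatching E ∧ #E = j} = M n j := by
  rw [M, pathMatchings, ← Nat.Iio_eq_range, ← Fin.map_valEmbedding_univ, powersetCard_map,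
    filter_map, card_map]
  congr 1
  ext E
  simp only [mem_filter, mem_univ, true_and, mem_powersetCard, subset_univ]
  rw [and_comm]
  refine and_congr_right fun _ => ?_
  simp only [IsPathMatching, Function.comp_apply, RelEmbedding.coe_toEmbedding, mapEmbedding_apply,
    mem_map, Fin.valEmbedding_apply, forall_exists_index, and_imp, forall_apply_eq_imp_iff₂]
  refine ⟨fun h a ha b hb _ => ?_, fun h a ha b hb => ?_⟩
  · have := h a ha b hb
    have := h b hb a ha
    omega
  · have := h a ha b hb
    omega

section pathGraph

variable {n : ℕ}

def pathEdgeSrc (n : ℕ) : Fin (n - 1) ↪ Fin n := Fin.castLEEmb (Nat.sub_le n 1)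

def pathEdgeTgt (n : ℕ) : Fin (n - 1) ↪ Fin n :=
  ⟨fun i => ⟨i + 1, Nat.add_lt_of_lt_sub i.isLt⟩, fun i j h => Fin.ext (by simpa using h)⟩

@[simp] lemma val_pathEdgeSrc (i : Fin (n - 1)) : (pathEdgeSrc n i : ℕ) = i := rfl

@[simp] lemma val_pathEdgeTgt (i : Fin (n - 1)) : (pathEdgeTgt n i : ℕ) = i + 1 := rfl

def coveredVertices (E : Finset (Fin (n - 1))) : Finset (Fin n) :=
  E.map (pathEdgeSrc n) ∪ E.map (pathEdgeTgt n)

lemma mem_coveredVertices {E : Finset (Fin (n - 1))} {v : Fin n} :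
    v ∈ coveredVertices E ↔ ∃ i ∈ E, v = pathEdgeSrc n i ∨ v = pathEdgeTgt n i := by
  simp only [coveredVertices, mem_union, mem_map, ← exists_or, ← and_or_left, eq_comm]

lemma card_coveredVertices {E : Finset (Fin (n - 1))} (hE : IsPathMatching E) :
    #(coveredVertices E) = 2 * #E := by
  rw [coveredVertices, card_union_of_disjoint, card_map, card_map, two_mul]
  simp only [disjoint_left, mem_map, not_exists, not_and, forall_exists_index, and_imp,
    forall_apply_eq_imp_iff₂]
  intro i hi j hj h
  exact hE j hj i hi (by simp only [Fin.ext_iff, val_pathEdgeSrc, val_pathEdgeTgt] at h; omega)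

lemma not_pathGraph_adj_inl_inl (u v : Fin n) : ¬ (pathGraph n).Adj (.inl u) (.inl v) := by
  simp [pathGraph, pathRel]

lemma pathGraph_adj_inr_inl (i : Fin (n - 1)) (v : Fin n) :
    (pathGraph n).Adj (.inr i) (.inl v) ↔ v = pathEdgeSrc n i ∨ v = pathEdgeTgt n i := by
  simp [pathGraph, pathRel, Fin.ext_iff]

lemma pathGraph_adj_inr_inr (i j : Fin (n - 1)) :
    (pathGraph n).Adj (.inr i) (.inr j) ↔ i.val + 1 = j.val ∨ j.val + 1 = i.val := by
  simp [pathGraph, pathRel]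

lemma pathGraph_indep_iff (S : Finset (Fin n ⊕ Fin (n - 1))) :
    (∀ a ∈ S, ∀ b ∈ S, ¬ (pathGraph n).Adj a b) ↔
      IsPathMatching S.toRight ∧ Disjoint S.toLeft (coveredVertices S.toRight) := by
  constructor
  · intro h
    refine ⟨fun i hi j hj hij => h _ (mem_toRight.1 hi) _ (mem_toRight.1 hj)
      ((pathGraph_adj_inr_inr i j).2 (.inl hij)), disjoint_left.2 fun v hv hcov => ?_⟩
    obtain ⟨i, hi, hvi⟩ := mem_coveredVertices.1 hcov
    exact h _ (mem_toRight.1 hi) _ (mem_toLeft.1 hv) ((pathGraph_adj_inr_inl i v).2 hvi)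
  · rintro ⟨hM, hD⟩ (u | i) hu (v | j) hv hadj
    · exact not_pathGraph_adj_inl_inl u v hadj
    · exact disjoint_left.1 hD (mem_toLeft.2 hu)
        (mem_coveredVertices.2 ⟨j, mem_toRight.2 hv, (pathGraph_adj_inr_inl j u).1 hadj.symm⟩)
    · exact disjoint_left.1 hD (mem_toLeft.2 hv)
        (mem_coveredVertices.2 ⟨i, mem_toRight.2 hu, (pathGraph_adj_inr_inl i v).1 hadj⟩)
    · rcases (pathGraph_adj_inr_inr i j).1 hadj with h | h
      exacts [hM i (mem_toRight.2 hu) j (mem_toRight.2 hv) h,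
        hM j (mem_toRight.2 hv) i (mem_toRight.2 hu) h]

end pathGraph

lemma card_filter_disjoint_coveredVertices (n k : ℕ) (E : Finset (Fin (n - 1))) :
    #{V : Finset (Fin n) | #V + #E = k ∧ IsPathMatching E ∧ Disjoint V (coveredVertices E)} =
      if IsPathMatching E ∧ #E ≤ k then (n - 2 * #E).choose (k - #E) else 0 := by
  split_ifs with h
  · obtain ⟨hE, hk⟩ := h
    have : ({V | #V + #E = k ∧ IsPathMatching E ∧ Disjoint V (coveredVertices E)} :
        Finset (Finset (Fin n))) = powersetCard (k - #E) (coveredVertices E)ᶜ := by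
      ext V
      simp only [mem_filter, mem_univ, true_and, mem_powersetCard, subset_compl_iff_disjoint_right,
        hE]
      grind
    rw [this, card_powersetCard, card_compl, card_coveredVertices hE, Fintype.card_fin]
  · rw [card_eq_zero, filter_eq_empty_iff]
    rintro V - ⟨hV, hE, -⟩
    exact h ⟨hE, by omega⟩

open scoped Classical in
theorem indep_set_count_general (n k : ℕ) :
    ((Finset.univ : Finset (Finset (Fin n ⊕ Fin (n - 1)))).filter
        (fun S => S.card = k ∧ ∀ a ∈ S, ∀ b ∈ S, ¬ (pathGraph n).Adj a b)).card
      = H n k := by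
  calc _ = #{S : Finset (Fin n ⊕ Fin (n - 1)) | #S.toLeft + #S.toRight = k ∧
          IsPathMatching S.toRight ∧ Disjoint S.toLeft (coveredVertices S.toRight)} := by
        refine congrArg card (filter_congr fun S _ => ?_)
        rw [pathGraph_indep_iff, card_toLeft_add_card_toRight]
    _ = ∑ E, #{V | #V + #E = k ∧ IsPathMatching E ∧ Disjoint V (coveredVertices E)} :=
        card_filter_toLeft_toRight fun V E => #V + #E = k ∧ IsPathMatching E ∧
          Disjoint V (coveredVertices E)
    _ = ∑ E ∈ {E | IsPathMatching E ∧ #E ≤ k}, (n - 2 * #E).choose (k - #E) := by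
        rw [sum_filter]
        exact sum_congr rfl fun E _ => card_filter_disjoint_coveredVertices n k E
    _ = ∑ j ∈ range (k + 1), ∑ E ∈ {E | IsPathMatching E ∧ #E = j},
          (n - 2 * j).choose (k - j) := by
        rw [← sum_fiberwise_of_maps_to (g := card) (t := range (k + 1))
          (fun E hE => mem_range.2 (Nat.lt_succ_of_le (mem_filter.1 hE).2.2))]
        refine sum_congr rfl fun j hj => sum_congr ?_ fun E hE => ?_
        · ext E
          simp only [mem_filter, mem_univ, true_and, mem_range] at hj ⊢
          grind
        · rw [(mem_filter.1 hE).2.2]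
    _ = H n k := by simp only [sum_const, card_isPathMatching, smul_eq_mul, H]

open scoped Classical in
theorem indep_set_count (n k : ℕ) (hn : 1 ≤ n) (hk : k ≤ n) :
    ((Finset.univ : Finset (Finset (Fin n ⊕ Fin (n - 1)))).filter
        (fun S => S.card = k ∧ ∀ a ∈ S, ∀ b ∈ S, ¬ (pathGraph n).Adj a b)).card
      = H n k :=
  indep_set_count_general n k
end
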